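/- arXiv:2604.20351 — 3 statements merged into one kernel-verified Lean document; each statement's English description precedes it below -/
import Mathlib

section
/- Let B be a set of nodes of odd cardinality with a matching M on the induced subgraph G[B] of cardinality (|B|−1)/2, so that B has a unique M-unmatched node r (the receptacle), and suppose every node v ∈ B \ {r} has both an even-length and an odd-length M-alternating path to r within G[B] (cherry blossom property). Then for every node u ∈ B there exists a matching M' on G[B] of cardinality (|B|−1)/2 whose unique unmatched node is u. -/
open Finset

def IsMatchingS {V : Type*} [DecidableEq V] (M : Finset (Sym2 V)) : Prop :=
  (∀ e ∈ M, ¬ e.IsDiag) ∧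
  (∀ e ∈ M, ∀ f ∈ M, e ≠ f → ∀ v : V, v ∈ e → v ∉ f)

def pathEdges {V : Type*} (l : List V) : List (Sym2 V) :=
  List.zipWith (fun a b => s(a, b)) l l.tail

/-- A simple path whose edges lie in `Eg` and alternate w.r.t. the matching `M`;
if `startMatched` is `true` the first edge is matched (edges at even positions are
matched), otherwise the first edge is unmatched. -/
def IsAltPath {V : Type*} [DecidableEq V] (Eg M : Finset (Sym2 V))
    (startMatched : Bool) (l : List V) : Prop :=
  l.Nodup ∧ (∀ e ∈ pathEdges l, e ∈ Eg) ∧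
  ∀ i (hi : i < (pathEdges l).length),
    ((pathEdges l)[i]'hi ∈ M ↔ (Even i ↔ startMatched = true))

/-- There is an even-length `M`-alternating path from `v` to `r` inside `B`,
starting (at `v`) with a matched edge. -/
def EvenAltPathIn {V : Type*} [DecidableEq V] (Eg M : Finset (Sym2 V))
    (B : Finset V) (v r : V) : Prop :=
  ∃ l : List V, IsAltPath Eg M true l ∧ (∀ x ∈ l, x ∈ B) ∧
    l.head? = some v ∧ l.getLast? = some r ∧ Even (l.length - 1)

/-- There is an odd-length `M`-alternating path from `v` to `r` inside `B`,
starting (at `v`) with an unmatched edge. -/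
def OddAltPathIn {V : Type*} [DecidableEq V] (Eg M : Finset (Sym2 V))
    (B : Finset V) (v r : V) : Prop :=
  ∃ l : List V, IsAltPath Eg M false l ∧ (∀ x ∈ l, x ∈ B) ∧
    l.head? = some v ∧ l.getLast? = some r ∧ Odd (l.length - 1)

/-!
For `u ≠ r` take an even alternating path `u = x₀, x₁, …, x₂ₖ = r`. Its edges `x₀x₁, x₂x₃, …`
are matched and cover `x₀, …, x₂ₖ₋₁`, while `x₁x₂, x₃x₄, …` are edges of `G[B]` covering
`x₁, …, x₂ₖ`. Exchanging the former for the latter in `M` gives a matching covering exactly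
`B \ {u}`, and counting vertices gives its size.
-/

namespace IsMatchingS

variable {V : Type*} [DecidableEq V] {M N : Finset (Sym2 V)}

theorem subset (hM : IsMatchingS M) (hNM : N ⊆ M) : IsMatchingS N :=
  ⟨fun e he => hM.1 e (hNM he),
    fun e he f hf hef => hM.2 e (hNM he) f (hNM hf) hef⟩

theorem eq_of_mem (hM : IsMatchingS M) {e f : Sym2 V} (he : e ∈ M) (hf : f ∈ M) {v : V}
    (hve : v ∈ e) (hvf : v ∈ f) : e = f :=
  by_contra fun hef => hM.2 e he f hf hef v hve hvf

end IsMatchingS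

def IsPerfectMatchingOn {V : Type*} [DecidableEq V] (M : Finset (Sym2 V)) (S : Finset V) :
    Prop :=
  IsMatchingS M ∧ ∀ x, (∃ e ∈ M, x ∈ e) ↔ x ∈ S

namespace IsPerfectMatchingOn

variable {V : Type*} [DecidableEq V] {M N : Finset (Sym2 V)} {S T : Finset V}

theorem mem_of_mem (h : IsPerfectMatchingOn M S) {e : Sym2 V} (he : e ∈ M) {x : V}
    (hx : x ∈ e) : x ∈ S :=
  (h.2 x).1 ⟨e, he, hx⟩

theorem exists_mem (h : IsPerfectMatchingOn M S) {x : V} (hx : x ∈ S) : ∃ e ∈ M, x ∈ e :=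
  (h.2 x).2 hx

theorem singleton {x y : V} (hxy : x ≠ y) : IsPerfectMatchingOn {s(x, y)} {x, y} :=
  ⟨⟨by simpa using hxy, by simp⟩, fun z => by simp [Sym2.mem_iff]⟩

theorem union (hM : IsPerfectMatchingOn M S) (hN : IsPerfectMatchingOn N T)
    (hST : Disjoint S T) : IsPerfectMatchingOn (M ∪ N) (S ∪ T) := by
  refine ⟨⟨fun e he => ?_, fun e he f hf hef v hve hvf => ?_⟩, fun x => ?_⟩
  · rcases mem_union.1 he with he | he
    exacts [hM.1.1 e he, hN.1.1 e he]
  · rcases mem_union.1 he with he | he <;> rcases mem_union.1 hf with hf | hf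
    · exact hM.1.2 e he f hf hef v hve hvf
    · exact disjoint_left.1 hST (hM.mem_of_mem he hve) (hN.mem_of_mem hf hvf)
    · exact disjoint_left.1 hST (hM.mem_of_mem hf hvf) (hN.mem_of_mem he hve)
    · exact hN.1.2 e he f hf hef v hve hvf
  · simp only [mem_union, ← hM.2 x, ← hN.2 x]
    constructor
    · rintro ⟨e, he | he, hx⟩
      exacts [.inl ⟨e, he, hx⟩, .inr ⟨e, he, hx⟩]
    · rintro (⟨e, he, hx⟩ | ⟨e, he, hx⟩)
      exacts [⟨e, .inl he, hx⟩, ⟨e, .inr he, hx⟩]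

theorem sdiff (hM : IsPerfectMatchingOn M S) (hN : IsPerfectMatchingOn N T) (hNM : N ⊆ M) :
    IsPerfectMatchingOn (M \ N) (S \ T) := by
  refine ⟨hM.1.subset sdiff_subset, fun x => ⟨?_, ?_⟩⟩
  · rintro ⟨e, he, hxe⟩
    rw [mem_sdiff] at he ⊢
    refine ⟨hM.mem_of_mem he.1 hxe, fun hxT => he.2 ?_⟩
    obtain ⟨f, hf, hxf⟩ := hN.exists_mem hxT
    rwa [hM.1.eq_of_mem he.1 (hNM hf) hxe hxf]
  · intro hx
    rw [mem_sdiff] at hx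
    obtain ⟨e, he, hxe⟩ := hM.exists_mem hx.1
    exact ⟨e, mem_sdiff.2 ⟨he, fun heN => hx.2 (hN.mem_of_mem heN hxe)⟩, hxe⟩

theorem card_eq (h : IsPerfectMatchingOn M S) : S.card = 2 * M.card := by
  have hS : S = M.biUnion Sym2.toFinset := by
    ext x
    simp [Sym2.mem_toFinset, ← h.2 x]
  rw [hS, card_biUnion, sum_congr rfl fun e he => Sym2.card_toFinset_of_not_isDiag e (h.1.1 e he),
    sum_const, smul_eq_mul, mul_comm]
  intro e he f hf hef
  exact disjoint_left.2 fun x hxe hxf =>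
    h.1.2 e he f hf hef x (Sym2.mem_toFinset.1 hxe) (Sym2.mem_toFinset.1 hxf)

end IsPerfectMatchingOn

theorem isPerfectMatchingOn_erase_iff {V : Type*} [DecidableEq V] {M : Finset (Sym2 V)}
    {B : Finset V} {u : V} :
    IsPerfectMatchingOn M (B.erase u) ↔ IsMatchingS M ∧ (∀ e ∈ M, ∀ x : V, x ∈ e → x ∈ B) ∧
      (∀ e ∈ M, u ∉ e) ∧ (∀ v ∈ B, v ≠ u → ∃ e ∈ M, v ∈ e) := by
  constructor
  · intro h
    exact ⟨h.1, fun e he x hx => (mem_erase.1 (h.mem_of_mem he hx)).2,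
      fun e he hu => (mem_erase.1 (h.mem_of_mem he hu)).1 rfl,
      fun v hv hvu => h.exists_mem (mem_erase.2 ⟨hvu, hv⟩)⟩
  · rintro ⟨hM, hB, hfree, hcov⟩
    refine ⟨hM, fun x => ⟨?_, fun hx => hcov x (mem_erase.1 hx).2 (mem_erase.1 hx).1⟩⟩
    rintro ⟨e, he, hx⟩
    exact mem_erase.2 ⟨fun hxu => hfree e he (hxu ▸ hx), hB e he x hx⟩

section Paths

variable {V : Type*}

theorem pathEdges_cons_cons (x y : V) (t : List V) :
    pathEdges (x :: y :: t) = s(x, y) :: pathEdges (y :: t) := rfl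

theorem mem_pathEdges_of_mem_tail : ∀ {l : List V} {e : Sym2 V}, e ∈ pathEdges l.tail →
    e ∈ pathEdges l
  | [], _, he => he
  | [_], _, he => he
  | _ :: _ :: _, _, he => List.mem_cons_of_mem _ he

/-- The third conjunct of `IsAltPath`. -/
def Alternates (M : Finset (Sym2 V)) (b : Bool) (l : List V) : Prop :=
  ∀ i (hi : i < (pathEdges l).length), ((pathEdges l)[i]'hi ∈ M ↔ (Even i ↔ b = true))

theorem alternates_nil {M : Finset (Sym2 V)} {b : Bool} : Alternates M b [] :=
  fun i hi => absurd hi (by simp [pathEdges])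

theorem alternates_cons_cons {M : Finset (Sym2 V)} {b : Bool} {x y : V} {t : List V} :
    Alternates M b (x :: y :: t) ↔ (s(x, y) ∈ M ↔ b = true) ∧ Alternates M (!b) (y :: t) := by
  simp only [Alternates, pathEdges_cons_cons]
  constructor
  · intro h
    refine ⟨by simpa using h 0 (by simp), fun i hi => ?_⟩
    cases b <;> simpa [Nat.even_add_one] using h (i + 1) (by simpa using hi)
  · rintro ⟨h0, h⟩ (_ | i) hi
    · simpa using h0
    · cases b <;> simpa [Nat.even_add_one] using h i (by simpa using hi)

variable [DecidableEq V]

def pairUp : List V → Finset (Sym2 V)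
  | x :: y :: t => {s(x, y)} ∪ pairUp t
  | _ => ∅

theorem pairUp_append : ∀ {l : List V} (l' : List V), Even l.length →
    pairUp (l ++ l') = pairUp l ∪ pairUp l'
  | [], _, _ => by simp [pairUp]
  | [_], _, h => absurd h (by simp)
  | x :: y :: t, l', h => by
    have ht : Even t.length := by simpa [Nat.even_add_one] using h
    simp only [List.cons_append, pairUp, pairUp_append l' ht, union_assoc]

theorem isPerfectMatchingOn_pairUp : ∀ {l : List V}, l.Nodup → Even l.length →
    IsPerfectMatchingOn (pairUp l) l.toFinset
  | [], _, _ => ⟨⟨by simp [pairUp], by simp [pairUp]⟩, by simp [pairUp]⟩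
  | [_], _, h => absurd h (by simp)
  | x :: y :: t, hl, h => by
    simp only [List.nodup_cons, List.mem_cons, not_or] at hl
    obtain ⟨⟨hxy, hxt⟩, hyt, ht⟩ := hl
    have hlen : Even t.length := by simpa [Nat.even_add_one] using h
    have hdisj : Disjoint ({x, y} : Finset V) t.toFinset := by
      simp [disjoint_insert_left, hxt, hyt]
    have hunion := (IsPerfectMatchingOn.singleton hxy).union
      (isPerfectMatchingOn_pairUp ht hlen) hdisj
    convert hunion using 1
    · simp [pairUp]
    · ext z
      simp

theorem mem_pathEdges_of_mem_pairUp : ∀ {l : List V} {e : Sym2 V}, e ∈ pairUp l →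
    e ∈ pathEdges l
  | [], _, he => by simp [pairUp] at he
  | [_], _, he => by simp [pairUp] at he
  | x :: y :: t, e, he => by
    rw [pathEdges_cons_cons]
    rcases mem_union.1 he with he | he
    · rw [mem_singleton.1 he]
      exact List.mem_cons_self
    · exact List.mem_cons_of_mem _ (mem_pathEdges_of_mem_tail (mem_pathEdges_of_mem_pairUp he))

theorem Alternates.pairUp_subset {M : Finset (Sym2 V)} :
    ∀ {l : List V}, Alternates M true l → pairUp l ⊆ M
  | [], _ => by simp [pairUp]
  | [_], _ => by simp [pairUp]
  | x :: y :: t, h => by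
    obtain ⟨hxy, hyt⟩ := alternates_cons_cons.1 h
    have ht : Alternates M true t := by
      match t, hyt with
      | [], _ => exact alternates_nil
      | _ :: _, hyt => simpa using (alternates_cons_cons.1 hyt).2
    exact union_subset (singleton_subset_iff.2 (by simpa using hxy)) ht.pairUp_subset

end Paths

theorem IsPerfectMatchingOn.exists_of_evenAltPathIn {V : Type*} [DecidableEq V]
    {Eg M : Finset (Sym2 V)} {B : Finset V} {u r : V}
    (hM : IsPerfectMatchingOn M (B.erase r)) (hMEg : M ⊆ Eg) (hur : EvenAltPathIn Eg M B u r) :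
    ∃ M' ⊆ Eg, IsPerfectMatchingOn M' (B.erase u) := by
  obtain ⟨l, ⟨hnd, hlEg, halt⟩, hlB, hhead, hlast, hlen⟩ := hur
  obtain ⟨t, rfl⟩ := List.head?_eq_some_iff.1 hhead
  obtain ⟨s, hs⟩ := List.getLast?_eq_some_iff.1 hlast
  -- `s` is the path without `r`, `t` the path without `u`; both have an even number of vertices,
  -- and the matched edges `pairUp s` are traded for the path edges `pairUp t`.
  have hslen : Even s.length := by simpa [hs] using hlen
  have htlen : Even t.length := by simpa using hlen
  have hsM : pairUp s ⊆ M := by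
    have hlM := Alternates.pairUp_subset halt
    rw [hs, pairUp_append [r] hslen] at hlM
    exact subset_union_left.trans hlM
  have hsP := isPerfectMatchingOn_pairUp (List.nodup_append.1 (hs ▸ hnd)).1 hslen
  have htP := isPerfectMatchingOn_pairUp (List.nodup_cons.1 hnd).2 htlen
  have hmem : ∀ x, x ∈ s ∨ x = r ↔ x = u ∨ x ∈ t := fun x => by
    simpa using (congrArg (x ∈ ·) hs).to_iff.symm
  have hut : u ∉ t := (List.nodup_cons.1 hnd).1
  have htB : ∀ x ∈ t, x ∈ B := fun x hx => hlB x (List.mem_cons_of_mem u hx)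
  have hdisj : Disjoint (B.erase r \ s.toFinset) t.toFinset := by
    refine disjoint_left.2 fun x hx hxt => ?_
    simp only [mem_sdiff, mem_erase, List.mem_toFinset] at hx hxt
    have := (hmem x).2 (.inr hxt)
    tauto
  have hunion : B.erase r \ s.toFinset ∪ t.toFinset = B.erase u := by
    ext x
    simp only [mem_union, mem_sdiff, mem_erase, List.mem_toFinset]
    have := hmem x
    have : x ∈ t → x ∈ B := htB x
    have : x ∈ t → x ≠ u := fun hxt hxu => hut (hxu ▸ hxt)
    tauto
  refine ⟨M \ pairUp s ∪ pairUp t, union_subset (sdiff_subset.trans hMEg)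
    fun e he => hlEg e (mem_pathEdges_of_mem_tail (mem_pathEdges_of_mem_pairUp he)), ?_⟩
  rw [← hunion]
  exact (hM.sdiff hsP hsM).union htP hdisj

theorem cherry_blossom_receptacle_rotation_general
    {V : Type*} [DecidableEq V]
    (Eg : Finset (Sym2 V))
    (B : Finset V) (r : V)
    (M : Finset (Sym2 V)) (hM : IsMatchingS M) (hMEg : M ⊆ Eg)
    (hMB : ∀ e ∈ M, ∀ x : V, x ∈ e → x ∈ B)
    (hrfree : ∀ e ∈ M, r ∉ e)
    (hcov : ∀ v ∈ B, v ≠ r → ∃ e ∈ M, v ∈ e)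
    -- cherry blossom property: every node of `B \ {r}` has both an even and an odd
    -- alternating path to the receptacle `r` inside `B`
    (hcherry : ∀ v ∈ B, v ≠ r →
      EvenAltPathIn Eg M B v r ∧ OddAltPathIn Eg M B v r) :
    ∀ u ∈ B, ∃ M' : Finset (Sym2 V),
      M' ⊆ Eg ∧ (∀ e ∈ M', ∀ x : V, x ∈ e → x ∈ B) ∧ IsMatchingS M' ∧
      2 * M'.card + 1 = B.card ∧
      (∀ e ∈ M', u ∉ e) ∧ (∀ v ∈ B, v ≠ u → ∃ e ∈ M', v ∈ e) := by
  intro u hu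
  have hMr : IsPerfectMatchingOn M (B.erase r) :=
    isPerfectMatchingOn_erase_iff.2 ⟨hM, hMB, hrfree, hcov⟩
  obtain ⟨M', hM'Eg, hM'⟩ : ∃ M' ⊆ Eg, IsPerfectMatchingOn M' (B.erase u) := by
    by_cases hur : u = r
    · exact ⟨M, hMEg, hur ▸ hMr⟩
    · exact hMr.exists_of_evenAltPathIn hMEg (hcherry u hu hur).1
  obtain ⟨hmatch, hB, hfree, hcov'⟩ := isPerfectMatchingOn_erase_iff.1 hM'
  have hcard : 2 * M'.card + 1 = B.card := by
    rw [← hM'.card_eq, card_erase_add_one hu]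
  exact ⟨M', hM'Eg, hB, hmatch, hcard, hfree, hcov'⟩

/-- Receptacle rotation: in a cherry blossom the receptacle can be moved to any
node `u ∈ B`. -/
theorem cherry_blossom_receptacle_rotation
    {V : Type*} [DecidableEq V]
    (Eg : Finset (Sym2 V)) (hEg : ∀ e ∈ Eg, ¬ e.IsDiag)
    (B : Finset V) (hodd : Odd B.card) (r : V) (hrB : r ∈ B)
    (M : Finset (Sym2 V)) (hM : IsMatchingS M) (hMEg : M ⊆ Eg)
    (hMB : ∀ e ∈ M, ∀ x : V, x ∈ e → x ∈ B)
    (hcard : 2 * M.card + 1 = B.card)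
    (hrfree : ∀ e ∈ M, r ∉ e)
    (hcov : ∀ v ∈ B, v ≠ r → ∃ e ∈ M, v ∈ e)
    -- cherry blossom property: every node of `B \ {r}` has both an even and an odd
    -- alternating path to the receptacle `r` inside `B`
    (hcherry : ∀ v ∈ B, v ≠ r →
      EvenAltPathIn Eg M B v r ∧ OddAltPathIn Eg M B v r) :
    ∀ u ∈ B, ∃ M' : Finset (Sym2 V),
      M' ⊆ Eg ∧ (∀ e ∈ M', ∀ x : V, x ∈ e → x ∈ B) ∧ IsMatchingS M' ∧
      2 * M'.card + 1 = B.card ∧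
      (∀ e ∈ M', u ∉ e) ∧ (∀ v ∈ B, v ≠ u → ∃ e ∈ M', v ∈ e) :=
  cherry_blossom_receptacle_rotation_general Eg B r M hM hMEg hMB hrfree hcov hcherry
end

section
/- Let B be a cherry blossom with receptacle r: a node set of odd cardinality with matching M of size (|B|−1)/2 on G[B], unique unmatched node r, such that every v ∈ B \ {r} has an alternating path of even length and one of odd length to r. Then there exists a node v ∈ B \ {r} adjacent to r by an edge not in M such that v has an even-length M-alternating path to r; consequently B contains an odd cycle through r whose edges alternate in M except at r. -/
open Finset

/-- The edges of a cycle given by a nonempty list of vertices. -/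
def cycleEdges {V : Type*} (l : List V) (h : l ≠ []) : List (Sym2 V) :=
  pathEdges l ++ [s(l.getLast h, l.head h)]

section Paths

variable {V : Type*}

theorem length_pathEdges (l : List V) : (pathEdges l).length = l.length - 1 := by
  simp [pathEdges]

theorem getElem_pathEdges {l : List V} {i : ℕ} (hi : i < (pathEdges l).length) :
    (pathEdges l)[i] = s(l[i]'(by rw [length_pathEdges] at hi; omega),
      l[i + 1]'(by rw [length_pathEdges] at hi; omega)) := by
  simp [pathEdges, List.getElem_tail]

theorem pathEdges_cons_cons_s7 (a b : V) (l : List V) :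
    pathEdges (a :: b :: l) = s(a, b) :: pathEdges (b :: l) := rfl

theorem pathEdges_reverse (l : List V) : pathEdges l.reverse = (pathEdges l).reverse := by
  refine List.ext_getElem (by simp [length_pathEdges]) fun i h₁ h₂ => ?_
  simp only [length_pathEdges, List.length_reverse] at h₁
  rw [List.getElem_reverse, getElem_pathEdges, getElem_pathEdges, Sym2.eq_swap]
  simp only [List.getElem_reverse, length_pathEdges]
  congr 2 <;> omega

theorem exists_mem_pathEdges_of_getLast? {l : List V} {r : V} (hl : l.Nodup)
    (hlast : l.getLast? = some r) (hlen : 2 ≤ l.length) :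
    ∃ w ∈ l, w ≠ r ∧ s(w, r) ∈ pathEdges l := by
  obtain ⟨w, t, hrev⟩ : ∃ w t, l.reverse = r :: w :: t := by
    rw [← List.head?_reverse] at hlast
    rw [← List.length_reverse] at hlen
    generalize l.reverse = m at hlast hlen ⊢
    rcases m with _ | ⟨r', _ | ⟨w, t⟩⟩
    · simp at hlen
    · simp at hlen
    · exact ⟨w, t, by simpa using hlast⟩
  have hnodup : (r :: w :: t).Nodup := hrev ▸ List.nodup_reverse.mpr hl
  have hmem : s(r, w) ∈ (pathEdges l).reverse := by
    simp [← pathEdges_reverse, hrev, pathEdges_cons_cons_s7]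
  refine ⟨w, List.mem_reverse.mp (by simp [hrev]), fun h => by simp_all, ?_⟩
  rwa [List.mem_reverse, Sym2.eq_swap] at hmem

end Paths

theorem length_cycleEdges {V : Type*} {c : List V} (hc : c ≠ []) :
    (cycleEdges c hc).length = c.length := by
  have := List.length_pos_iff.mpr hc
  simp only [cycleEdges, List.length_append, length_pathEdges, List.length_singleton]
  omega

section AltPaths

variable {V : Type*} [DecidableEq V] {Eg M : Finset (Sym2 V)}

theorem IsAltPath.reverse {b : Bool} {l : List V} (h : IsAltPath Eg M b l)
    (heven : Even (l.length - 1)) : IsAltPath Eg M (!b) l.reverse := by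
  refine ⟨List.nodup_reverse.mpr h.1, fun e he => h.2.1 e ?_, fun i hi => ?_⟩
  · rwa [pathEdges_reverse, List.mem_reverse] at he
  · have hi' := hi
    rw [pathEdges_reverse, List.length_reverse, length_pathEdges] at hi'
    have hparity : Even (l.length - 1 - 1 - i) ↔ ¬Even i := by
      rw [Nat.even_sub (by omega), Nat.even_sub (by omega)]
      simp [heven]
    simp only [pathEdges_reverse, List.getElem_reverse]
    rw [h.2.2, length_pathEdges, hparity]
    cases b <;> simp

theorem IsAltPath.cycleEdges_mem_iff {c : List V} (h : IsAltPath Eg M false c) (hc : c ≠ [])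
    (heven : Even (c.length - 1)) (hclose : s(c.getLast hc, c.head hc) ∉ M)
    (i : ℕ) (hi : i < (cycleEdges c hc).length) :
    (cycleEdges c hc)[i] ∈ M ↔ Odd i := by
  simp only [cycleEdges, List.getElem_append]
  split_ifs with hlt
  · rw [h.2.2]
    simp
  · have hi' : i = c.length - 1 := by
      rw [length_cycleEdges] at hi
      rw [length_pathEdges] at hlt
      omega
    simp only [List.getElem_singleton, hclose, false_iff, Nat.not_odd_iff_even, hi', heven]

theorem EvenAltPathIn.exists_alternating_cycle {B : Finset V} {w r : V}
    (h : EvenAltPathIn Eg M B w r) (hwr : w ≠ r) (hEg : s(w, r) ∈ Eg) (hM : s(w, r) ∉ M) :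
    ∃ c : List V, ∃ hc : c ≠ [], c.Nodup ∧ (∀ x ∈ c, x ∈ B) ∧
      c.head hc = r ∧ Odd (cycleEdges c hc).length ∧
      3 ≤ (cycleEdges c hc).length ∧
      (∀ e ∈ cycleEdges c hc, e ∈ Eg) ∧
      (∀ i (hi : i < (cycleEdges c hc).length),
        ((cycleEdges c hc)[i]'hi ∈ M ↔ Odd i)) := by
  obtain ⟨l, hl, hlB, hhead, hlast, heven⟩ := h
  have hne : l ≠ [] := by rintro rfl; simp at hhead
  have hlen : 3 ≤ l.length := by
    have hpos := List.length_pos_iff.mpr hne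
    have hone : l.length ≠ 1 := by
      intro h1
      obtain ⟨a, rfl⟩ := List.length_eq_one_iff.mp h1
      simp_all
    obtain ⟨k, hk⟩ := heven
    omega
  have hc : l.reverse ≠ [] := List.reverse_ne_nil_iff.mpr hne
  have hchead : l.reverse.head hc = r := by
    rw [List.head_reverse]
    exact Option.some_injective _ (by rw [← List.getLast?_eq_some_getLast]; exact hlast)
  have hclast : l.reverse.getLast hc = w := by
    rw [List.getLast_reverse]
    exact Option.some_injective _ (by rw [← List.head?_eq_some_head]; exact hhead)
  have hrev : IsAltPath Eg M false l.reverse := hl.reverse heven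
  have hclen : (cycleEdges l.reverse hc).length = l.length := by
    rw [length_cycleEdges, List.length_reverse]
  refine ⟨l.reverse, hc, hrev.1, by simpa using hlB, hchead, ?_, hclen ▸ hlen, ?_,
    hrev.cycleEdges_mem_iff hc (by simpa using heven) (by rwa [hclast, hchead])⟩
  · rw [hclen, Nat.odd_iff]
    obtain ⟨k, hk⟩ := heven
    omega
  · intro e he
    simp only [cycleEdges, List.mem_append, List.mem_singleton] at he
    rcases he with he | rfl
    · exact hrev.2.1 e he
    · rwa [hclast, hchead]

end AltPaths

theorem cherry_blossom_contains_blossom_general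
    {V : Type*} [DecidableEq V]
    (Eg : Finset (Sym2 V))
    (B : Finset V) (hB3 : 3 ≤ B.card)
    (r : V)
    (M : Finset (Sym2 V))
    (hrfree : ∀ e ∈ M, r ∉ e)
    (hcherry : ∀ v ∈ B, v ≠ r →
      EvenAltPathIn Eg M B v r ∧ OddAltPathIn Eg M B v r) :
    (∃ v ∈ B, v ≠ r ∧ s(v, r) ∈ Eg ∧ s(v, r) ∉ M ∧ EvenAltPathIn Eg M B v r) ∧
    (∃ c : List V, ∃ hc : c ≠ [], c.Nodup ∧ (∀ x ∈ c, x ∈ B) ∧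
      c.head hc = r ∧ Odd (cycleEdges c hc).length ∧
      3 ≤ (cycleEdges c hc).length ∧
      (∀ e ∈ cycleEdges c hc, e ∈ Eg) ∧
      (∀ i (hi : i < (cycleEdges c hc).length),
        ((cycleEdges c hc)[i]'hi ∈ M ↔ Odd i))) := by
  obtain ⟨v, hvB, hvr⟩ := B.exists_mem_ne (by omega) r
  -- `w` is the neighbour of `r` on an odd alternating path from any `v ≠ r`
  obtain ⟨-, l, hl, hlB, -, hlast, hodd⟩ := hcherry v hvB hvr
  obtain ⟨w, hwl, hwr, hwr_mem⟩ :=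
    exists_mem_pathEdges_of_getLast? hl.1 hlast (by obtain ⟨k, hk⟩ := hodd; omega)
  have hwB : w ∈ B := hlB w hwl
  have hEg : s(w, r) ∈ Eg := hl.2.1 _ hwr_mem
  have hM : s(w, r) ∉ M := fun h => hrfree _ h (Sym2.mem_mk_right w r)
  obtain ⟨hpath, -⟩ := hcherry w hwB hwr
  exact ⟨⟨w, hwB, hwr, hEg, hM, hpath⟩, hpath.exists_alternating_cycle hwr hEg hM⟩

/-- Every cherry blossom contains a traditional blossom: some node `v ≠ r` is
joined to the receptacle `r` by an unmatched edge and has an even-length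
alternating path to `r`; consequently `B` contains an odd cycle through `r`
alternating except at `r`. -/
theorem cherry_blossom_contains_blossom
    {V : Type*} [DecidableEq V]
    (Eg : Finset (Sym2 V)) (hEg : ∀ e ∈ Eg, ¬ e.IsDiag)
    (B : Finset V) (hodd : Odd B.card) (hB3 : 3 ≤ B.card)
    (r : V) (hrB : r ∈ B)
    (M : Finset (Sym2 V)) (hM : IsMatchingS M) (hMEg : M ⊆ Eg)
    (hMB : ∀ e ∈ M, ∀ x : V, x ∈ e → x ∈ B)
    (hcard : 2 * M.card + 1 = B.card)
    (hrfree : ∀ e ∈ M, r ∉ e)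
    (hcov : ∀ v ∈ B, v ≠ r → ∃ e ∈ M, v ∈ e)
    (hcherry : ∀ v ∈ B, v ≠ r →
      EvenAltPathIn Eg M B v r ∧ OddAltPathIn Eg M B v r) :
    (∃ v ∈ B, v ≠ r ∧ s(v, r) ∈ Eg ∧ s(v, r) ∉ M ∧ EvenAltPathIn Eg M B v r) ∧
    (∃ c : List V, ∃ hc : c ≠ [], c.Nodup ∧ (∀ x ∈ c, x ∈ B) ∧
      c.head hc = r ∧ Odd (cycleEdges c hc).length ∧
      3 ≤ (cycleEdges c hc).length ∧
      (∀ e ∈ cycleEdges c hc, e ∈ Eg) ∧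
      (∀ i (hi : i < (cycleEdges c hc).length),
        ((cycleEdges c hc)[i]'hi ∈ M ↔ Odd i))) :=
  cherry_blossom_contains_blossom_general Eg B hB3 r M hrfree hcherry
end

section
/- If the coefficients a_i, b_{ij}, c_{ij} are integers, then the linear program maximize ∑_i δ_i subject to δ_i ≥ 0, δ_i ≤ a_i, δ_i + δ_j ≤ b_{ij}, δ_i − δ_j ≤ c_{ij} has an optimal solution in which every δ_i is half-integral (i.e., 2δ_i ∈ ℤ). -/
open Finset

/-- Feasibility for the dual-update LP: `δ ≥ 0`, `δ_i ≤ a_i` for `i ∈ SA`,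
`δ_i + δ_j ≤ b_{ij}` for `(i,j) ∈ SB`, `δ_i − δ_j ≤ c_{ij}` for `(i,j) ∈ SC`. -/
def DeltaFeasible {k : ℕ} (SA : Finset (Fin k))
    (SB SC : Finset (Fin k × Fin k))
    (a : Fin k → ℤ) (b c : Fin k × Fin k → ℤ) (δ : Fin k → ℝ) : Prop :=
  (∀ i, 0 ≤ δ i) ∧ (∀ i ∈ SA, δ i ≤ (a i : ℝ)) ∧
  (∀ p ∈ SB, δ p.1 + δ p.2 ≤ (b p : ℝ)) ∧
  (∀ p ∈ SC, δ p.1 - δ p.2 ≤ (c p : ℝ))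

/-!
Write `x = 2δ`. Every constraint then bounds some `x i` from above or below by an even integer,
by `2 b - x j`, or by `x j + 2 c`. Shift each non-integral `x i` by `t` towards the odd endpoint
of the unit interval containing it, and leave the integral ones in place. As long as `|t|` is at
most the distance of every non-integral `x i` to the nearest integer, this shift is monotone
(two points of the same open unit interval move by the same amount), fixes integers and
commutes with `x ↦ x + 2m` and `x ↦ 2m - x`, so it preserves feasibility, for `t` and `-t`
alike. At an optimum both shifted points are therefore optimal, and taking `|t|` as large as
allowed makes one more coordinate integral. Hence an optimum with the fewest non-integral `2 δ i`
is half-integral.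
-/

noncomputable def parityDir (x : ℝ) : ℝ :=
  if Int.fract x = 0 then 0 else if Even ⌊x⌋ then 1 else -1

noncomputable def parityShift (t x : ℝ) : ℝ := x + t * parityDir x

def IsSmallShift (t x : ℝ) : Prop := Int.fract x ≠ 0 → |t| ≤ |x - round x|

lemma parityDir_of_fract_eq_zero {x : ℝ} (hx : Int.fract x = 0) : parityDir x = 0 := if_pos hx

lemma abs_parityDir_of_fract_ne_zero {x : ℝ} (hx : Int.fract x ≠ 0) : |parityDir x| = 1 := by
  simp [parityDir, hx, apply_ite]

lemma parityDir_add_two_mul_intCast (x : ℝ) (m : ℤ) :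
    parityDir (x + 2 * m) = parityDir x := by
  have h : x + 2 * m = x + ((2 * m : ℤ) : ℝ) := by push_cast; ring
  unfold parityDir
  rw [h, Int.fract_add_intCast, Int.floor_add_intCast]
  simp [parity_simps]

lemma parityDir_two_mul_intCast_sub (m : ℤ) (x : ℝ) :
    parityDir (2 * m - x) = -parityDir x := by
  have h : (2 * m - x : ℝ) = -x + ((2 * m : ℤ) : ℝ) := by push_cast; ring
  unfold parityDir
  rw [h, Int.fract_add_intCast, Int.floor_add_intCast, Int.floor_neg]
  simp only [Int.fract_neg_eq_zero]
  by_cases hx : Int.fract x = 0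
  · simp [hx]
  · have hceil : ⌈x⌉ = ⌊x⌋ + 1 := (Int.ceil_eq_floor_add_one_iff_notMem x).2
      (mt Int.fract_eq_zero_iff.2 hx)
    rw [hceil]
    by_cases he : Even ⌊x⌋ <;> simp [hx, he, parity_simps]

lemma parityShift_of_fract_eq_zero (t : ℝ) {x : ℝ} (hx : Int.fract x = 0) :
    parityShift t x = x := by
  simp [parityShift, parityDir_of_fract_eq_zero hx]

lemma parityShift_add_two_mul_intCast (t x : ℝ) (m : ℤ) :
    parityShift t (x + 2 * m) = parityShift t x + 2 * m := by
  rw [parityShift, parityShift, parityDir_add_two_mul_intCast]; ring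

lemma parityShift_two_mul_intCast_sub (t : ℝ) (m : ℤ) (x : ℝ) :
    parityShift t (2 * m - x) = 2 * m - parityShift t x := by
  rw [parityShift, parityShift, parityDir_two_mul_intCast_sub]; ring

lemma isSmallShift_intCast (t : ℝ) (m : ℤ) : IsSmallShift t m :=
  fun h => absurd (Int.fract_intCast m) h

lemma IsSmallShift.neg {t x : ℝ} (h : IsSmallShift t x) : IsSmallShift (-t) x := by
  simpa [IsSmallShift] using h

lemma IsSmallShift.add_two_mul_intCast {t x : ℝ} (h : IsSmallShift t x) (m : ℤ) :
    IsSmallShift t (x + 2 * m) := by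
  have e : x + 2 * m = x + ((2 * m : ℤ) : ℝ) := by push_cast; ring
  unfold IsSmallShift
  rwa [e, abs_sub_round_eq_min, Int.fract_add_intCast, ← abs_sub_round_eq_min]

lemma IsSmallShift.two_mul_intCast_sub {t x : ℝ} (h : IsSmallShift t x) (m : ℤ) :
    IsSmallShift t (2 * m - x) := by
  have e : (2 * m - x : ℝ) = -x + ((2 * m : ℤ) : ℝ) := by push_cast; ring
  intro hx
  rw [e, Int.fract_add_intCast] at hx
  have hx' : Int.fract x ≠ 0 := mt Int.fract_neg_eq_zero.2 hx
  have := h hx'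
  rw [abs_sub_round_eq_min] at this
  rwa [e, abs_sub_round_eq_min, Int.fract_add_intCast, Int.fract_neg hx', sub_sub_cancel, min_comm]

lemma IsSmallShift.parityShift_mem_Icc {t x : ℝ} (h : IsSmallShift t x) :
    parityShift t x ∈ Set.Icc (⌊x⌋ : ℝ) (⌊x⌋ + 1) := by
  by_cases hx : Int.fract x = 0
  · rw [parityShift_of_fract_eq_zero t hx]
    exact ⟨Int.floor_le x, (Int.lt_floor_add_one x).le⟩
  · have ht := h hx
    rw [abs_sub_round_eq_min, le_min_iff] at ht
    have hstep : |t * parityDir x| = |t| := by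
      rw [abs_mul, abs_parityDir_of_fract_ne_zero hx, mul_one]
    have := abs_le.1 hstep.le
    have := Int.floor_add_fract x
    rw [Set.mem_Icc, parityShift]
    constructor <;> linarith

lemma parityShift_mono {t x y : ℝ} (hxy : x ≤ y) (hx : IsSmallShift t x)
    (hy : IsSmallShift t y) :
    parityShift t x ≤ parityShift t y := by
  obtain ⟨hx₁, hx₂⟩ := hx.parityShift_mem_Icc
  obtain ⟨hy₁, hy₂⟩ := hy.parityShift_mem_Icc
  rcases (Int.floor_mono hxy).lt_or_eq with hlt | heq
  · have : (⌊x⌋ : ℝ) + 1 ≤ ⌊y⌋ := by exact_mod_cast hlt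
    linarith
  have hfloor : (⌊x⌋ : ℝ) = ⌊y⌋ := by rw [heq]
  by_cases hfx : Int.fract x = 0
  · rw [parityShift_of_fract_eq_zero t hfx]
    linarith [Int.floor_add_fract x]
  by_cases hfy : Int.fract y = 0
  · have hyx : y ≤ x := by linarith [Int.floor_le x, Int.floor_add_fract y]
    rw [le_antisymm hxy hyx]
  · have : parityDir x = parityDir y := by simp [parityDir, hfx, hfy, heq]
    rw [parityShift, parityShift, this]
    linarith

lemma exists_isSmallShift_fract_parityShift_eq_zero {ι : Type*} [Fintype ι] {x : ι → ℝ}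
    (hx : ∃ i, Int.fract (x i) ≠ 0) :
    ∃ t, (∀ i, IsSmallShift t (x i)) ∧
      ∃ i₀, Int.fract (x i₀) ≠ 0 ∧ Int.fract (parityShift t (x i₀)) = 0 := by
  classical
  obtain ⟨i₀, hi₀, hmin⟩ := (univ.filter fun i => Int.fract (x i) ≠ 0).exists_min_image
    (fun i => |x i - round (x i)|) (by simpa [Finset.Nonempty] using hx)
  simp only [mem_filter, mem_univ, true_and] at hi₀ hmin
  -- moving `x i₀` to its nearest integer is a step of exactly the minimal admissible length
  set σ := parityDir (x i₀) with hσ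
  refine ⟨(round (x i₀) - x i₀) * σ, fun i hi => ?_, i₀, hi₀, ?_⟩
  · rw [abs_mul, hσ, abs_parityDir_of_fract_ne_zero hi₀, mul_one, abs_sub_comm]
    exact hmin i hi
  · have hσσ : σ * σ = 1 := by
      rw [← abs_mul_abs_self, hσ, abs_parityDir_of_fract_ne_zero hi₀, mul_one]
    have : parityShift ((round (x i₀) - x i₀) * σ) (x i₀) = round (x i₀) := by
      rw [parityShift, ← hσ, mul_assoc, hσσ]; ring
    rw [this, Int.fract_intCast]

section DualUpdate

variable {k : ℕ} {SA : Finset (Fin k)} {SB SC : Finset (Fin k × Fin k)}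
  {a : Fin k → ℤ} {b c : Fin k × Fin k → ℤ}

lemma isClosed_setOf_deltaFeasible :
    IsClosed {δ | DeltaFeasible SA SB SC a b c δ} := by
  simp only [DeltaFeasible, Set.ofPred_and, Set.ofPred_forall]
  repeat' first
    | refine IsClosed.inter ?_ ?_
    | refine isClosed_iInter fun _ => ?_
    | exact isClosed_le (by fun_prop) (by fun_prop)

lemma isCompact_setOf_deltaFeasible {R : ℝ}
    (hR : ∀ δ : Fin k → ℝ, DeltaFeasible SA SB SC a b c δ → ∀ i, δ i ≤ R) :
    IsCompact {δ | DeltaFeasible SA SB SC a b c δ} :=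
  (isCompact_Icc (a := 0) (b := fun _ => R)).of_isClosed_subset isClosed_setOf_deltaFeasible
    fun δ hδ => ⟨hδ.1, hR δ hδ⟩

noncomputable def halfParityShift {ι : Type*} (t : ℝ) (δ : ι → ℝ) : ι → ℝ :=
  fun i => parityShift t (2 * δ i) / 2

lemma sum_halfParityShift {ι : Type*} [Fintype ι] (t : ℝ) (δ : ι → ℝ) :
    ∑ i, halfParityShift t δ i = ∑ i, δ i + t / 2 * ∑ i, parityDir (2 * δ i) := by
  simp only [halfParityShift, parityShift, mul_sum, ← sum_add_distrib]
  exact sum_congr rfl fun i _ => by ring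

lemma DeltaFeasible.halfParityShift {t : ℝ} {δ : Fin k → ℝ}
    (hδ : DeltaFeasible SA SB SC a b c δ) (ht : ∀ i, IsSmallShift t (2 * δ i)) :
    DeltaFeasible SA SB SC a b c (halfParityShift t δ) := by
  obtain ⟨h0, hA, hB, hC⟩ := hδ
  refine ⟨fun i => ?_, fun i hi => ?_, fun p hp => ?_, fun p hp => ?_⟩ <;>
    simp only [_root_.halfParityShift]
  · have := parityShift_mono (by push_cast; linarith [h0 i]) (isSmallShift_intCast t 0) (ht i)
    rw [parityShift_of_fract_eq_zero t (Int.fract_intCast 0)] at this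
    push_cast at this; linarith
  · have := parityShift_mono (by push_cast; linarith [hA i hi]) (ht i)
      (isSmallShift_intCast t (2 * a i))
    rw [parityShift_of_fract_eq_zero t (Int.fract_intCast _)] at this
    push_cast at this; linarith
  · have := parityShift_mono (by linarith [hB p hp]) (ht p.1) ((ht p.2).two_mul_intCast_sub (b p))
    rw [parityShift_two_mul_intCast_sub] at this
    linarith
  · have := parityShift_mono (by linarith [hC p hp]) (ht p.1) ((ht p.2).add_two_mul_intCast (c p))
    rw [parityShift_add_two_mul_intCast] at this
    linarith

open Classical in
noncomputable def nonHalfIntegralCoords {ι : Type*} [Fintype ι] (δ : ι → ℝ) : Finset ι :=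
  univ.filter fun i => Int.fract (2 * δ i) ≠ 0

lemma exists_isMaxOn_card_nonHalfIntegralCoords_lt {δ : Fin k → ℝ}
    (hδ : DeltaFeasible SA SB SC a b c δ)
    (hmax : IsMaxOn (fun δ => ∑ i, δ i) {δ | DeltaFeasible SA SB SC a b c δ} δ)
    (hbad : ∃ i, Int.fract (2 * δ i) ≠ 0) :
    ∃ δ', DeltaFeasible SA SB SC a b c δ' ∧
      IsMaxOn (fun δ => ∑ i, δ i) {δ | DeltaFeasible SA SB SC a b c δ} δ' ∧
      (nonHalfIntegralCoords δ').card < (nonHalfIntegralCoords δ).card := by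
  obtain ⟨t, ht, i₀, hi₀, hi₀'⟩ := exists_isSmallShift_fract_parityShift_eq_zero hbad
  have hplus := hδ.halfParityShift ht
  have hminus := hδ.halfParityShift fun i => (ht i).neg
  -- the optimum `δ` is the midpoint of the two shifted points, so both are optimal
  have hsum : ∑ i, halfParityShift t δ i = ∑ i, δ i := by
    have h₁ := hmax hplus
    have h₂ := hmax hminus
    simp only [Set.mem_ofPred_eq, sum_halfParityShift] at h₁ h₂ ⊢
    linarith
  refine ⟨_, hplus, isMaxOn_iff.2 fun δ' hδ' => (isMaxOn_iff.1 hmax δ' hδ').trans hsum.ge,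
    ?_⟩
  refine card_lt_card ((ssubset_iff_of_subset fun i hi => ?_).2 ⟨i₀, ?_, ?_⟩)
  · simp only [nonHalfIntegralCoords, mem_filter, mem_univ, true_and] at hi ⊢
    contrapose! hi
    simp [halfParityShift, parityShift_of_fract_eq_zero t hi, hi]
  · simpa [nonHalfIntegralCoords] using hi₀
  · simp [nonHalfIntegralCoords, halfParityShift, mul_div_cancel₀, hi₀']

end DualUpdate

/-- The dual-update LP with integer coefficients has a half-integral optimal
solution. -/
theorem dual_update_LP_half_integral_optimum
    {k : ℕ} (SA : Finset (Fin k)) (SB SC : Finset (Fin k × Fin k))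
    (a : Fin k → ℤ) (b c : Fin k × Fin k → ℤ)
    -- the feasible region is nonempty (it contains 0)
    (hne : DeltaFeasible SA SB SC a b c (fun _ => 0))
    -- and bounded
    (hbdd : ∃ R : ℝ, ∀ δ : Fin k → ℝ,
      DeltaFeasible SA SB SC a b c δ → ∀ i, δ i ≤ R) :
    ∃ δ : Fin k → ℝ, DeltaFeasible SA SB SC a b c δ ∧
      (∀ δ' : Fin k → ℝ, DeltaFeasible SA SB SC a b c δ' →
        ∑ i, δ' i ≤ ∑ i, δ i) ∧
      (∀ i, ∃ z : ℤ, 2 * δ i = (z : ℝ)) := by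
  obtain ⟨R, hR⟩ := hbdd
  let K := {δ | DeltaFeasible SA SB SC a b c δ}
  obtain ⟨δ₀, hδ₀, hmax₀⟩ :=
    (isCompact_setOf_deltaFeasible hR).exists_isMaxOn ⟨_, hne⟩
      (by fun_prop : Continuous fun δ : Fin k → ℝ => ∑ i, δ i).continuousOn
  let optima := {δ | δ ∈ K ∧ IsMaxOn (fun δ => ∑ i, δ i) K δ}
  let δ := Function.argminOn (fun δ => (nonHalfIntegralCoords δ).card) optima
    ⟨δ₀, hδ₀, hmax₀⟩
  obtain ⟨hδ, hmax⟩ : δ ∈ optima := Function.argminOn_mem _ _ _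
  refine ⟨δ, hδ, fun δ' hδ' => hmax hδ', fun i => ?_⟩
  by_contra hi
  have hbad : Int.fract (2 * δ i) ≠ 0 := fun h => hi <| by
    obtain ⟨z, hz⟩ := Int.fract_eq_zero_iff.1 h
    exact ⟨z, hz.symm⟩
  obtain ⟨δ', hδ', hmax', hlt⟩ :=
    exists_isMaxOn_card_nonHalfIntegralCoords_lt hδ hmax ⟨i, hbad⟩
  exact Function.not_lt_argminOn (fun δ => (nonHalfIntegralCoords δ).card) optima
    (a := δ') ⟨hδ', hmax'⟩ hlt
end
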